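/- arXiv:2010.01890 — 4 statements merged into one kernel-verified Lean document; each statement's English description precedes it below -/
import Mathlib

section
/- Let G = (V, E) be a finite undirected multigraph (loops allowed), d ≥ 1 and s ≥ 0 integers. Then it is possible to remove at most s edges from G and orient the remaining edges so that every vertex has outdegree at most d, if and only if for every subset X of edges, d·|Γ(X)| + s ≥ |X|, where Γ(X) denotes the set of vertices incident to at least one edge of X. -/
/-!
Deleting an edge is modelled as sending it to one of `s` extra "deletion slots", and orienting
an edge out of `v` as sending it to one of `d` slots at `v`. A (d,s)-suitable choice is then an
injective assignment of edges to slots, each edge using a slot at one of its endpoints or a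
deletion slot, and the edges of a nonempty `X` can reach exactly `d·|Γ(X)| + s` slots. So the
condition is Hall's condition, and the theorem is Hall's marriage theorem.
-/

open Finset

namespace Multigraph

variable {V E : Type*} [DecidableEq V] (h1 h2 : E → V) (d s : ℕ)

theorem card_le_of_orientation [Fintype E] [DecidableEq E] (R : Finset E) (o : E → Bool)
    (hR : #R ≤ s)
    (ho : ∀ v : V, #(univ.filter fun e : E => e ∉ R ∧ (if o e then h1 e else h2 e) = v) ≤ d)
    (X : Finset E) : #X ≤ d * #(X.image h1 ∪ X.image h2) + s := by
  have hkept : #(X \ R) ≤ d * #(X.image h1 ∪ X.image h2) := by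
    refine card_le_mul_card_image_of_maps_to (f := fun e => if o e then h1 e else h2 e)
      (fun e he => ?_) d (fun v _ => (card_le_card fun e he => ?_).trans (ho v))
    · have heX := (mem_sdiff.mp he).1
      split_ifs
      · exact mem_union_left _ (mem_image_of_mem h1 heX)
      · exact mem_union_right _ (mem_image_of_mem h2 heX)
    · simp only [mem_filter, mem_sdiff] at he ⊢
      exact ⟨mem_univ e, he.1.2, he.2⟩
  have hdeleted : #(X ∩ R) ≤ s := (card_le_card inter_subset_right).trans hR
  have hsplit := card_sdiff_add_card_inter X R
  omega

def slots (e : E) : Finset ((V × Fin d) ⊕ Fin s) :=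
  ({h1 e, h2 e} ×ˢ univ).disjSum univ

theorem card_le_card_biUnion_slots
    (hX : ∀ X : Finset E, #X ≤ d * #(X.image h1 ∪ X.image h2) + s) (X : Finset E) :
    #X ≤ #(X.biUnion (slots h1 h2 d s)) := by
  obtain rfl | ⟨e₀, he₀⟩ := X.eq_empty_or_nonempty
  · simp
  have hreach :
      ((X.image h1 ∪ X.image h2) ×ˢ univ).disjSum univ ⊆ X.biUnion (slots h1 h2 d s) := by
    rintro (⟨v, i⟩ | j) hx
    · simp only [inl_mem_disjSum, mem_product, mem_union, mem_image] at hx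
      obtain ⟨⟨e, he, rfl⟩ | ⟨e, he, rfl⟩, -⟩ := hx
      all_goals exact mem_biUnion.mpr ⟨e, he, by simp [slots]⟩
    · exact mem_biUnion.mpr ⟨e₀, he₀, by simp [slots]⟩
  calc #X ≤ d * #(X.image h1 ∪ X.image h2) + s := hX X
    _ = #(((X.image h1 ∪ X.image h2) ×ˢ univ).disjSum (univ : Finset (Fin s))) := by
      rw [card_disjSum, card_product, card_fin, card_fin, mul_comm]
    _ ≤ #(X.biUnion (slots h1 h2 d s)) := card_le_card hreach

variable {d s}

/-- The vertex whose slot `e` occupies; for an edge in a deletion slot the value is irrelevant. -/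
def tail (f : E → (V × Fin d) ⊕ Fin s) (e : E) : V :=
  Sum.elim Prod.fst (fun _ => h1 e) (f e)

variable {h1 h2}

theorem tail_eq_or_eq {f : E → (V × Fin d) ⊕ Fin s} (hf : ∀ e, f e ∈ slots h1 h2 d s e)
    (e : E) : tail h1 f e = h1 e ∨ tail h1 f e = h2 e := by
  rcases mem_disjSum.mp (hf e) with ⟨⟨v, i⟩, hv, hfe⟩ | ⟨j, -, hfe⟩
  · simpa [tail, ← hfe] using (mem_product.mp hv).1
  · simp [tail, ← hfe]

theorem head_eq_tail {f : E → (V × Fin d) ⊕ Fin s} (hf : ∀ e, f e ∈ slots h1 h2 d s e)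
    (e : E) :
    (if decide (tail h1 f e = h1 e) then h1 e else h2 e) = tail h1 f e := by
  have h := tail_eq_or_eq hf e
  generalize tail h1 f e = t at h ⊢
  by_cases ht : t = h1 e <;> simp_all

theorem exists_orientation_of_injective [Fintype E] [DecidableEq E]
    {f : E → (V × Fin d) ⊕ Fin s} (hinj : f.Injective)
    (hf : ∀ e, f e ∈ slots h1 h2 d s e) :
    ∃ (R : Finset E) (o : E → Bool), #R ≤ s ∧ ∀ v : V,
      #(univ.filter fun e : E => e ∉ R ∧ (if o e then h1 e else h2 e) = v) ≤ d := by
  refine ⟨univ.filter fun e => (f e).isRight, fun e => decide (tail h1 f e = h1 e),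
    ?_, fun v => ?_⟩
  · calc _ ≤ #(univ.map (Function.Embedding.inr : Fin s ↪ (V × Fin d) ⊕ Fin s)) := by
          refine card_le_card_of_injOn f (fun e he => ?_) hinj.injOn
          obtain ⟨j, hj⟩ := Sum.isRight_iff.mp (mem_filter.mp he).2
          simp [hj]
      _ = s := by simp
  · calc _ ≤ #(univ.map ⟨fun i : Fin d => (Sum.inl (v, i) : (V × Fin d) ⊕ Fin s),
            fun i j h => by simpa using h⟩) := by
          refine card_le_card_of_injOn f (fun e he => ?_) hinj.injOn
          obtain ⟨-, hkept, hhead⟩ := mem_filter.mp he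
          rw [head_eq_tail hf] at hhead
          unfold tail at hhead
          rcases hfe : f e with ⟨w, i⟩ | j
          · rw [hfe, Sum.elim_inl] at hhead
            exact mem_map.mpr ⟨i, mem_univ i, by rw [← hhead]; rfl⟩
          · simp [hfe] at hkept
      _ = d := by simp

end Multigraph

open Multigraph in
theorem stmt_0_general {V E : Type*} [Fintype E] [DecidableEq V] [DecidableEq E]
    (h1 h2 : E → V) (d s : ℕ) :
    (∃ (R : Finset E) (o : E → Bool), R.card ≤ s ∧ ∀ v : V,
        (Finset.univ.filter
          (fun e : E => e ∉ R ∧ (if o e then h1 e else h2 e) = v)).card ≤ d) ↔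
      ∀ X : Finset E, X.card ≤ d * (X.image h1 ∪ X.image h2).card + s := by
  refine ⟨fun ⟨R, o, hR, ho⟩ => card_le_of_orientation h1 h2 d s R o hR ho, fun hX => ?_⟩
  obtain ⟨f, hinj, hf⟩ := (all_card_le_biUnion_card_iff_exists_injective (slots h1 h2 d s)).mp
    (card_le_card_biUnion_slots h1 h2 d s hX)
  exact exists_orientation_of_injective hinj hf

/-- A finite undirected multigraph is modelled by an edge index type `E` with two
endpoint maps `h1 h2 : E → V` (parallel edges and loops allowed).
An orientation `o : E → Bool` directs edge `e` out of `h1 e` if `o e = true`,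
and out of `h2 e` otherwise.

The graph is (d,s)-suitable (one can delete at most s edges and orient the rest so
that every vertex has outdegree ≤ d) iff for every subset X of edges,
d·|Γ(X)| + s ≥ |X|, where Γ(X) is the set of endpoints of edges of X. -/
theorem stmt_0 {V E : Type*} [Fintype V] [Fintype E] [DecidableEq V] [DecidableEq E]
    (h1 h2 : E → V) (d s : ℕ) (hd : 1 ≤ d) :
    (∃ (R : Finset E) (o : E → Bool), R.card ≤ s ∧ ∀ v : V,
        (Finset.univ.filter
          (fun e : E => e ∉ R ∧ (if o e then h1 e else h2 e) = v)).card ≤ d) ↔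
      ∀ X : Finset E, X.card ≤ d * (X.image h1 ∪ X.image h2).card + s :=
  stmt_0_general h1 h2 d s
end

section
/- Let G = (V, E) be a finite multigraph with an orientation D minimizing the overflow ov(D) = Σ_v max(outdeg_D(v) − d, 0) over all orientations of G. Let Y be the set of vertices with outdegree > d in D, and let Y' be the set of vertices reachable from Y by a directed path in D. Then every vertex in Y' has outdegree at least d in D. -/
/-!
Reverse a directed path from `u` to `w` (after cutting out its cycles). This lowers the outdegree
of `u` by one, raises that of `w` by one and leaves all other outdegrees unchanged. If `w` had
outdegree `< d`, the overflow at `w` stays `0` while the overflow at `u > d` drops, contradicting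
minimality.
-/

open Finset

section Orientation

variable {V E : Type*} [DecidableEq E] (h1 h2 : E → V)

/-- Under the orientation `o`, edge `e` points from `tail o e` to `head o e`. -/
def tail (o : E → Bool) (e : E) : V := if o e then h1 e else h2 e

def head (o : E → Bool) (e : E) : V := if o e then h2 e else h1 e

def Arc (o : E → Bool) (a b : V) : Prop := ∃ e, tail h1 h2 o e = a ∧ head h1 h2 o e = b

def reverseEdge (o : E → Bool) (e : E) : E → Bool := Function.update o e (!o e)

variable {h1 h2}

lemma tail_reverseEdge_self (o : E → Bool) (e : E) :
    tail h1 h2 (reverseEdge o e) e = head h1 h2 o e := by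
  cases h : o e <;> simp [tail, head, reverseEdge, h]

lemma tail_reverseEdge_of_ne {o : E → Bool} {e e' : E} (h : e' ≠ e) :
    tail h1 h2 (reverseEdge o e) e' = tail h1 h2 o e' := by
  simp [tail, reverseEdge, Function.update_of_ne h]

lemma head_reverseEdge_of_ne {o : E → Bool} {e e' : E} (h : e' ≠ e) :
    head h1 h2 (reverseEdge o e) e' = head h1 h2 o e' := by
  simp [head, reverseEdge, Function.update_of_ne h]

lemma Arc.reverseEdge {o : E → Bool} {e : E} {a b : V} (hab : Arc h1 h2 o a b)
    (ha : a ≠ tail h1 h2 o e) : Arc h1 h2 (reverseEdge o e) a b := by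
  obtain ⟨e', rfl, rfl⟩ := hab
  have hne : e' ≠ e := by rintro rfl; exact ha rfl
  exact ⟨e', tail_reverseEdge_of_ne hne, head_reverseEdge_of_ne hne⟩

variable [DecidableEq V] [Fintype E]

variable (h1 h2) in
def outdegree (o : E → Bool) (v : V) : ℕ := #{e | tail h1 h2 o e = v}

lemma outdegree_reverseEdge_add_single (o : E → Bool) (e : E) :
    outdegree h1 h2 (reverseEdge o e) + Pi.single (tail h1 h2 o e) 1
      = outdegree h1 h2 o + Pi.single (head h1 h2 o e) 1 := by
  ext v
  have hrest : ∑ e' ∈ univ.erase e, (if tail h1 h2 (reverseEdge o e) e' = v then 1 else 0)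
      = ∑ e' ∈ univ.erase e, (if tail h1 h2 o e' = v then 1 else 0) :=
    sum_congr rfl fun e' he' => by rw [tail_reverseEdge_of_ne (ne_of_mem_erase he')]
  simp only [Pi.add_apply, outdegree, card_filter, ← add_sum_erase _ _ (mem_univ e), hrest,
    tail_reverseEdge_self, Pi.single_apply, eq_comm (a := v)]
  split_ifs <;> omega

theorem exists_outdegree_add_single_of_isChain (o : E → Bool) (a : V) (l : List V)
    (hl : (a :: l).IsChain (Arc h1 h2 o)) :
    ∃ o', outdegree h1 h2 o' + Pi.single a 1
      = outdegree h1 h2 o + Pi.single ((a :: l).getLast (List.cons_ne_nil a l)) 1 := by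
  match l, hl with
  | [], _ => exact ⟨o, rfl⟩
  | b :: t, hl =>
    by_cases ha : a ∈ b :: t
    · -- skip the closed walk from `a` back to `a`, whose reversal would not preserve the chain
      obtain ⟨s, t', hst⟩ := List.append_of_mem ha
      have hchain : (a :: t').IsChain (Arc h1 h2 o) := by
        rw [hst] at hl
        exact (List.isChain_cons_split.mp hl).2
      have : t'.length ≤ t.length := by
        have := congrArg List.length hst
        simp only [List.length_append, List.length_cons] at this; omega
      obtain ⟨o', ho'⟩ := exists_outdegree_add_single_of_isChain o a t' hchain
      refine ⟨o', ?_⟩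
      simp_rw [List.getLast_cons (List.cons_ne_nil b t), hst]
      rwa [List.getLast_append_of_ne_nil _ (List.cons_ne_nil a t')]
    · obtain ⟨⟨e, rfl, rfl⟩, ht⟩ := List.isChain_cons_cons.mp hl
      have ht' : (head h1 h2 o e :: t).IsChain (Arc h1 h2 (reverseEdge o e)) :=
        ht.imp_of_mem_imp fun x _ hx _ hxy => hxy.reverseEdge fun hx' => ha (hx' ▸ hx)
      have : t.length < (head h1 h2 o e :: t).length := by simp
      obtain ⟨o', ho'⟩ := exists_outdegree_add_single_of_isChain (reverseEdge o e) _ t ht'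
      refine ⟨o', add_right_cancel (b := Pi.single (head h1 h2 o e) 1) ?_⟩
      rw [List.getLast_cons (List.cons_ne_nil _ t), add_right_comm, ho', add_right_comm,
        outdegree_reverseEdge_add_single, add_right_comm]
termination_by l.length

theorem exists_outdegree_add_single_of_reflTransGen {o : E → Bool} {a b : V}
    (hab : Relation.ReflTransGen (Arc h1 h2 o) a b) :
    ∃ o', outdegree h1 h2 o' + Pi.single a 1 = outdegree h1 h2 o + Pi.single b 1 := by
  obtain ⟨l, hl, rfl⟩ := List.exists_isChain_cons_of_relationReflTransGen hab
  exact exists_outdegree_add_single_of_isChain o a l hl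

end Orientation

lemma sum_tsub_lt_of_add_single_eq {V : Type*} [Fintype V] [DecidableEq V] {f g : V → ℕ}
    {u w : V} {d : ℕ} (hfg : f + Pi.single u 1 = g + Pi.single w 1) (hu : d < g u)
    (hw : g w < d) :
    ∑ v, (f v - d) < ∑ v, (g v - d) := by
  have huw : u ≠ w := by rintro rfl; omega
  have hv (v : V) := congrFun hfg v
  simp only [Pi.add_apply, Pi.single_apply] at hv
  refine sum_lt_sum (fun v _ => ?_) ⟨u, mem_univ u, ?_⟩
  · have := hv v
    split_ifs at this <;> subst_vars <;> omega
  · have := hv u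
    simp only [if_true, if_neg huw] at this
    omega

theorem stmt_1_general {V E : Type*} [Fintype V] [Fintype E] [DecidableEq V]
    (h1 h2 : E → V) (d : ℕ) (o : E → Bool)
    (outdeg : (E → Bool) → V → ℕ)
    (houtdeg : ∀ o' v, outdeg o' v =
      (Finset.univ.filter (fun e : E => (if o' e then h1 e else h2 e) = v)).card)
    (hmin : ∀ o' : E → Bool, ∑ v : V, (outdeg o v - d) ≤ ∑ v : V, (outdeg o' v - d))
    (u w : V) (hu : d < outdeg o u)
    (hpath : Relation.ReflTransGen
      (fun a b : V => ∃ e : E, (if o e then h1 e else h2 e) = a ∧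
        (if o e then h2 e else h1 e) = b) u w) :
    d ≤ outdeg o w := by
  classical
  obtain rfl : outdeg = outdegree h1 h2 := funext₂ houtdeg
  obtain ⟨o', ho'⟩ := exists_outdegree_add_single_of_reflTransGen (h1 := h1) (h2 := h2) hpath
  by_contra! hw
  exact (hmin o').not_gt (sum_tsub_lt_of_add_single_eq ho' hu hw)

/-- Let `o` be an orientation of a finite multigraph (edges `E` with endpoints
`h1 h2 : E → V`; edge `e` points out of `h1 e` if `o e = true`, else out of `h2 e`)
minimizing the overflow Σ_v max(outdeg(v) − d, 0).  Then every vertex reachable by a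
directed path from a vertex of outdegree > d has outdegree at least d. -/
theorem stmt_1 {V E : Type*} [Fintype V] [Fintype E] [DecidableEq V]
    (h1 h2 : E → V) (d : ℕ) (hd : 1 ≤ d) (o : E → Bool)
    (outdeg : (E → Bool) → V → ℕ)
    (houtdeg : ∀ o' v, outdeg o' v =
      (Finset.univ.filter (fun e : E => (if o' e then h1 e else h2 e) = v)).card)
    (hmin : ∀ o' : E → Bool, ∑ v : V, (outdeg o v - d) ≤ ∑ v : V, (outdeg o' v - d))
    (u w : V) (hu : d < outdeg o u)
    (hpath : Relation.ReflTransGen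
      (fun a b : V => ∃ e : E, (if o e then h1 e else h2 e) = a ∧
        (if o e then h2 e else h1 e) = b) u w) :
    d ≤ outdeg o w :=
  stmt_1_general h1 h2 d o outdeg houtdeg hmin u w hu hpath
end

section
/- Let D be an orientation of a multigraph that minimizes the overflow Σ_v max(outdeg(v) − d, 0). If there is a directed path in D from a vertex u with outdeg(u) > d to a vertex w with outdeg(w) < d, then reversing all edges along this path yields an orientation with strictly smaller overflow, a contradiction; hence no such path exists. -/
/-!
Reverse the walk one edge at a time. Reversing an edge `e : a → b` with `outdeg a > d` lowers
the overflow by one unless `outdeg b ≥ d`; in that case the overflow is unchanged, so the new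
orientation is again minimal, and in it `b` has outdegree `> d`. Continuing from `b`, every
vertex on the walk has outdegree `≥ d`. Should the rest of the walk use `e` again, the walk
starting at that later use of `e` is a shorter one in the old orientation.
-/

namespace BoolOrientation

open Finset

variable {V E : Type*} (h1 h2 : E → V)

/-- The orientation `o` directs `e` from `h1 e` to `h2 e` if `o e`, and the other way if not. -/
def src (o : E → Bool) (e : E) : V := if o e then h1 e else h2 e

def tgt (o : E → Bool) (e : E) : V := if o e then h2 e else h1 e

def outdeg [Fintype E] [DecidableEq V] (o : E → Bool) (v : V) : ℕ :=
  #{e | src h1 h2 o e = v}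

def overflow [Fintype V] [Fintype E] [DecidableEq V] (d : ℕ) (o : E → Bool) : ℕ :=
  ∑ v, (outdeg h1 h2 o v - d)

def IsMinOverflow [Fintype V] [Fintype E] [DecidableEq V] (d : ℕ) (o : E → Bool) : Prop :=
  ∀ o', overflow h1 h2 d o ≤ overflow h1 h2 d o'

def IsWalk (o : E → Bool) : List E → V → V → Prop
  | [], u, w => u = w
  | e :: l, u, w => src h1 h2 o e = u ∧ IsWalk o l (tgt h1 h2 o e) w

def reverseEdge [DecidableEq E] (o : E → Bool) (e : E) : E → Bool :=
  Function.update o e (!o e)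

variable {h1 h2}

section Reverse

variable [DecidableEq E] {o : E → Bool} {e f : E}

@[simp]
lemma src_reverseEdge_self : src h1 h2 (reverseEdge o e) e = tgt h1 h2 o e := by
  cases h : o e <;> simp [src, tgt, reverseEdge, h]

lemma src_reverseEdge_of_ne (hf : f ≠ e) : src h1 h2 (reverseEdge o e) f = src h1 h2 o f := by
  simp [src, reverseEdge, hf]

lemma tgt_reverseEdge_of_ne (hf : f ≠ e) : tgt h1 h2 (reverseEdge o e) f = tgt h1 h2 o f := by
  simp [tgt, reverseEdge, hf]

lemma IsWalk.reverseEdge_of_notMem {l : List E} {u w : V} (hl : IsWalk h1 h2 o l u w)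
    (he : e ∉ l) : IsWalk h1 h2 (reverseEdge o e) l u w := by
  induction l generalizing u with
  | nil => exact hl
  | cons f l ih =>
    have hf : f ≠ e := fun h => he (h ▸ List.mem_cons_self)
    rw [IsWalk, src_reverseEdge_of_ne hf, tgt_reverseEdge_of_ne hf]
    exact ⟨hl.1, ih hl.2 fun h => he (List.mem_cons_of_mem _ h)⟩

variable [Fintype E] [DecidableEq V]

variable (h1 h2 o e) in
lemma outdeg_reverseEdge_add (v : V) :
    outdeg h1 h2 (reverseEdge o e) v + (if src h1 h2 o e = v then 1 else 0) =
      outdeg h1 h2 o v + (if tgt h1 h2 o e = v then 1 else 0) := by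
  have hrest : ∑ f ∈ univ.erase e, (if src h1 h2 (reverseEdge o e) f = v then 1 else 0) =
      ∑ f ∈ univ.erase e, (if src h1 h2 o f = v then 1 else 0) :=
    sum_congr rfl fun f hf => by rw [src_reverseEdge_of_ne (ne_of_mem_erase hf)]
  simp only [outdeg, card_filter, ← add_sum_erase _ _ (mem_univ e), hrest,
    src_reverseEdge_self]
  ring

lemma outdeg_reverseEdge_of_ne {v : V} (hs : src h1 h2 o e ≠ v) (ht : tgt h1 h2 o e ≠ v) :
    outdeg h1 h2 (reverseEdge o e) v = outdeg h1 h2 o v := by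
  simpa [hs, ht] using outdeg_reverseEdge_add h1 h2 o e v

lemma lt_outdeg_reverseEdge_tgt {d : ℕ} (hs : d < outdeg h1 h2 o (src h1 h2 o e))
    (ht : d ≤ outdeg h1 h2 o (tgt h1 h2 o e)) :
    d < outdeg h1 h2 (reverseEdge o e) (tgt h1 h2 o e) := by
  have := outdeg_reverseEdge_add h1 h2 o e (tgt h1 h2 o e)
  rw [if_pos rfl] at this
  split_ifs at this with hloop
  · rw [hloop] at hs; omega
  · omega

variable [Fintype V]

lemma overflow_reverseEdge_add_one {d : ℕ} (hs : d < outdeg h1 h2 o (src h1 h2 o e)) :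
    overflow h1 h2 d (reverseEdge o e) + 1 =
      overflow h1 h2 d o + (if d ≤ outdeg h1 h2 o (tgt h1 h2 o e) then 1 else 0) := by
  have hpoint : ∀ v, (outdeg h1 h2 (reverseEdge o e) v - d) +
      (if src h1 h2 o e = v then 1 else 0) =
      (outdeg h1 h2 o v - d) +
        (if tgt h1 h2 o e = v then (if d ≤ outdeg h1 h2 o v then 1 else 0) else 0) := by
    intro v
    have := outdeg_reverseEdge_add h1 h2 o e v
    split_ifs at this ⊢ <;> subst_vars <;> omega
  have := sum_congr rfl fun v (_ : v ∈ univ) => hpoint v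
  rwa [sum_add_distrib, sum_add_distrib, sum_ite_eq, sum_ite_eq, if_pos (mem_univ _),
    if_pos (mem_univ _)] at this

variable {d : ℕ}

lemma IsMinOverflow.le_outdeg_tgt (hmin : IsMinOverflow h1 h2 d o)
    (hs : d < outdeg h1 h2 o (src h1 h2 o e)) : d ≤ outdeg h1 h2 o (tgt h1 h2 o e) := by
  by_contra h
  have := overflow_reverseEdge_add_one hs
  rw [if_neg h] at this
  have := hmin (reverseEdge o e)
  omega

lemma IsMinOverflow.reverseEdge (hmin : IsMinOverflow h1 h2 d o)
    (hs : d < outdeg h1 h2 o (src h1 h2 o e)) : IsMinOverflow h1 h2 d (reverseEdge o e) := by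
  have := overflow_reverseEdge_add_one hs
  rw [if_pos (hmin.le_outdeg_tgt hs)] at this
  exact fun o' => (hmin o').trans' (by omega)

end Reverse

lemma IsWalk.of_append_cons {o : E → Bool} {e : E} {p q : List E} {u w : V}
    (hl : IsWalk h1 h2 o (p ++ e :: q) u w) : IsWalk h1 h2 o (e :: q) (src h1 h2 o e) w := by
  induction p generalizing u with
  | nil => exact ⟨rfl, hl.2⟩
  | cons f p ih => exact ih hl.2

lemma exists_isWalk_of_reflTransGen {o : E → Bool} {u w : V}
    (h : Relation.ReflTransGen (fun a b => ∃ e, src h1 h2 o e = a ∧ tgt h1 h2 o e = b) u w) :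
    ∃ l, IsWalk h1 h2 o l u w := by
  induction h using Relation.ReflTransGen.head_induction_on with
  | refl => exact ⟨[], rfl⟩
  | head hstep _ ih =>
    obtain ⟨l, hl⟩ := ih
    obtain ⟨e, rfl, rfl⟩ := hstep
    exact ⟨e :: l, rfl, hl⟩

theorem IsMinOverflow.le_outdeg_of_isWalk [Fintype V] [Fintype E] [DecidableEq V]
    [DecidableEq E] {d : ℕ} {o : E → Bool} (hmin : IsMinOverflow h1 h2 d o) {l : List E}
    {u w : V} (hu : d < outdeg h1 h2 o u) (hl : IsWalk h1 h2 o l u w) :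
    d ≤ outdeg h1 h2 o w := by
  induction hn : l.length using Nat.strong_induction_on generalizing o l u with
  | _ n ih =>
  subst hn
  obtain _ | ⟨e, t⟩ := l
  · exact hl ▸ hu.le
  obtain ⟨rfl, ht⟩ := hl
  have htgt := hmin.le_outdeg_tgt hu
  by_contra! hw
  by_cases he : e ∈ t
  · obtain ⟨p, q, rfl⟩ := List.append_of_mem he
    exact hw.not_ge <| ih _ (by simp) hmin hu ht.of_append_cons rfl
  have hw_src : src h1 h2 o e ≠ w := by rintro rfl; omega
  have hw_tgt : tgt h1 h2 o e ≠ w := by rintro rfl; omega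
  have := ih _ (by simp) (hmin.reverseEdge hu) (lt_outdeg_reverseEdge_tgt hu htgt)
    (ht.reverseEdge_of_notMem he) rfl
  rw [outdeg_reverseEdge_of_ne hw_src hw_tgt] at this
  omega

end BoolOrientation

theorem stmt_2_general {V E : Type*} [Fintype V] [Fintype E] [DecidableEq V]
    (h1 h2 : E → V) (d : ℕ) (o : E → Bool)
    (outdeg : (E → Bool) → V → ℕ)
    (houtdeg : ∀ o' v, outdeg o' v =
      (Finset.univ.filter (fun e : E => (if o' e then h1 e else h2 e) = v)).card)
    (hmin : ∀ o' : E → Bool, ∑ v : V, (outdeg o v - d) ≤ ∑ v : V, (outdeg o' v - d)) :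
    ¬ ∃ u w : V, d < outdeg o u ∧ outdeg o w < d ∧
      Relation.ReflTransGen
        (fun a b : V => ∃ e : E, (if o e then h1 e else h2 e) = a ∧
          (if o e then h2 e else h1 e) = b) u w := by
  classical
  obtain rfl : outdeg = BoolOrientation.outdeg h1 h2 := funext₂ houtdeg
  rintro ⟨u, w, hu, hw, hpath⟩
  obtain ⟨l, hl⟩ := BoolOrientation.exists_isWalk_of_reflTransGen hpath
  exact hw.not_ge (BoolOrientation.IsMinOverflow.le_outdeg_of_isWalk hmin hu hl)

/-- Let `o` be an orientation of a finite multigraph (edges `E` with endpoints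
`h1 h2 : E → V`) minimizing the overflow Σ_v max(outdeg(v) − d, 0).  Then there is
no directed path from a vertex of outdegree > d to a vertex of outdegree < d. -/
theorem stmt_2 {V E : Type*} [Fintype V] [Fintype E] [DecidableEq V]
    (h1 h2 : E → V) (d : ℕ) (hd : 1 ≤ d) (o : E → Bool)
    (outdeg : (E → Bool) → V → ℕ)
    (houtdeg : ∀ o' v, outdeg o' v =
      (Finset.univ.filter (fun e : E => (if o' e then h1 e else h2 e) = v)).card)
    (hmin : ∀ o' : E → Bool, ∑ v : V, (outdeg o v - d) ≤ ∑ v : V, (outdeg o' v - d)) :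
    ¬ ∃ u w : V, d < outdeg o u ∧ outdeg o w < d ∧
      Relation.ReflTransGen
        (fun a b : V => ∃ e : E, (if o e then h1 e else h2 e) = a ∧
          (if o e then h2 e else h1 e) = b) u w :=
  stmt_2_general h1 h2 d o outdeg houtdeg hmin
end

section
/- For fixed constants ε > 0, d ≥ 1, s ≥ 0, the failure probability of cuckoo hashing with n items, m = (1+ε)n/d buckets of capacity d, a stash of size s, and uniformly independent hash functions h₁, h₂ satisfies fail(n, ε, d, s) = Ω(n^{−d−s}). -/
set_option maxHeartbeats 1000000

open Finset

lemma countE {n m : ℕ} (S : Finset (Fin n)) (v : Fin m) :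
    ((Finset.univ.filter (fun p : (Fin n → Fin m) × (Fin n → Fin m) =>
      (∀ x ∈ S, p.1 x = v ∧ p.2 x = v) ∧ ∀ x ∉ S, p.1 x ≠ p.2 x)).card)
      = (m * m - m) ^ (n - S.card) := by
  classical
  set t : Fin n → Finset (Fin m × Fin m) :=
    fun x => if x ∈ S then {(v, v)} else Finset.univ.offDiag with ht
  have hcard : (Fintype.piFinset t).card = (m * m - m) ^ (n - S.card) := by
    rw [Fintype.card_piFinset]
    have : ∀ x, (t x).card = if x ∈ S then 1 else m * m - m := by
      intro x
      by_cases hx : x ∈ S <;> simp [ht, hx, Finset.offDiag_card]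
    simp_rw [this]
    rw [Finset.prod_ite, Finset.prod_const, Finset.prod_const]
    simp only [one_pow, one_mul]
    congr 1
    have h : Finset.univ.filter (fun x => ¬ x ∈ S) = Sᶜ := by ext x; simp
    rw [h, Finset.card_compl, Fintype.card_fin]
  rw [← hcard]
  refine Finset.card_bij' (fun p _ => fun x => (p.1 x, p.2 x))
    (fun g _ => (fun x => (g x).1, fun x => (g x).2)) ?_ ?_ ?_ ?_
  · intro p hp
    simp only [Finset.mem_filter, Finset.mem_univ, true_and] at hp
    rw [Fintype.mem_piFinset]
    intro x
    by_cases hx : x ∈ S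
    · simp [ht, hx, (hp.1 x hx).1, (hp.1 x hx).2]
    · simp [ht, hx, Finset.mem_offDiag, hp.2 x hx]
  · intro g hg
    rw [Fintype.mem_piFinset] at hg
    simp only [Finset.mem_filter, Finset.mem_univ, true_and]
    constructor
    · intro x hx
      have := hg x
      simp [ht, hx, Prod.ext_iff] at this
      exact ⟨this.1, this.2⟩
    · intro x hx
      have := hg x
      simp [ht, hx, Finset.mem_offDiag] at this
      exact this
  · intro p _; rfl
  · intro g _; rfl

lemma countLB (n m d s : ℕ) :
    Nat.choose n (d + s + 1) * m * (m * m - m) ^ (n - (d + s + 1)) ≤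
      (Finset.univ.filter
        (fun p : (Fin n → Fin m) × (Fin n → Fin m) =>
          ¬ ∃ f : Fin n → Option Bool,
              (Finset.univ.filter (fun x : Fin n => f x = none)).card ≤ s ∧
              ∀ v : Fin m,
                (Finset.univ.filter (fun x : Fin n =>
                  (f x = some true ∧ p.1 x = v) ∨
                  (f x = some false ∧ p.2 x = v))).card ≤ d)).card := by
  classical
  set k := d + s + 1 with hk
  set E : Finset (Fin n) × Fin m → Finset ((Fin n → Fin m) × (Fin n → Fin m)) :=
    fun q => Finset.univ.filter (fun p =>
      (∀ x ∈ q.1, p.1 x = q.2 ∧ p.2 x = q.2) ∧ ∀ x ∉ q.1, p.1 x ≠ p.2 x) with hE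
  set I : Finset (Finset (Fin n) × Fin m) :=
    (Finset.univ.powersetCard k) ×ˢ (Finset.univ : Finset (Fin m)) with hI
  have hdisj : ∀ q ∈ I, ∀ q' ∈ I, q ≠ q' → Disjoint (E q) (E q') := by
    rintro ⟨S, v⟩ hq ⟨S', v'⟩ hq' hne
    simp only [hI, Finset.mem_product, Finset.mem_powersetCard_univ] at hq hq'
    rw [Finset.disjoint_left]
    rintro p hp hp'
    simp only [hE, Finset.mem_filter, Finset.mem_univ, true_and] at hp hp'
    have hSS' : S = S' := by
      ext x
      constructor
      · intro hx
        by_contra hx'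
        exact hp'.2 x hx' ((hp.1 x hx).1.trans (hp.1 x hx).2.symm)
      · intro hx
        by_contra hx'
        exact hp.2 x hx' ((hp'.1 x hx).1.trans (hp'.1 x hx).2.symm)
    have hS : S.Nonempty := by
      rw [← Finset.card_pos, hq.1]; omega
    obtain ⟨x, hx⟩ := hS
    have hv : v = v' := by
      have h1 := (hp.1 x hx).1
      have h2 := (hp'.1 x (hSS' ▸ hx)).1
      rw [h1] at h2; exact h2
    exact hne (by rw [Prod.ext_iff]; exact ⟨hSS', hv⟩)
  have hsub : I.biUnion E ⊆ Finset.univ.filter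
        (fun p : (Fin n → Fin m) × (Fin n → Fin m) =>
          ¬ ∃ f : Fin n → Option Bool,
              (Finset.univ.filter (fun x : Fin n => f x = none)).card ≤ s ∧
              ∀ v : Fin m,
                (Finset.univ.filter (fun x : Fin n =>
                  (f x = some true ∧ p.1 x = v) ∨
                  (f x = some false ∧ p.2 x = v))).card ≤ d) := by
    intro p hp
    rw [Finset.mem_biUnion] at hp
    obtain ⟨⟨S, v⟩, hq, hpE⟩ := hp
    simp only [hI, Finset.mem_product, Finset.mem_powersetCard_univ] at hq
    simp only [hE, Finset.mem_filter, Finset.mem_univ, true_and] at hpE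
    rw [Finset.mem_filter]
    refine ⟨Finset.mem_univ _, ?_⟩
    rintro ⟨f, hf1, hf2⟩
    have hsubS : S ⊆ (Finset.univ.filter (fun x : Fin n => f x = none)) ∪
        (Finset.univ.filter (fun x : Fin n =>
          (f x = some true ∧ p.1 x = v) ∨ (f x = some false ∧ p.2 x = v))) := by
      intro x hx
      rcases hxf : f x with _ | b
      · exact Finset.mem_union_left _ (by simp [hxf])
      · rcases b with _ | _
        · exact Finset.mem_union_right _ (by simp [hxf, (hpE.1 x hx).2])
        · exact Finset.mem_union_right _ (by simp [hxf, (hpE.1 x hx).1])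
    have := Finset.card_le_card hsubS
    have h2 := Finset.card_union_le
      (Finset.univ.filter (fun x : Fin n => f x = none))
      (Finset.univ.filter (fun x : Fin n =>
          (f x = some true ∧ p.1 x = v) ∨ (f x = some false ∧ p.2 x = v)))
    have h3 := hf2 v
    rw [hq.1] at this
    omega
  calc Nat.choose n k * m * (m * m - m) ^ (n - k)
      = ∑ q ∈ I, (m * m - m) ^ (n - k) := by
        rw [Finset.sum_const, hI, Finset.card_product, Finset.card_powersetCard,
          Finset.card_univ, Finset.card_univ, Fintype.card_fin, Fintype.card_fin,
          smul_eq_mul, mul_comm]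
    _ = ∑ q ∈ I, (E q).card := by
        apply Finset.sum_congr rfl
        rintro ⟨S, v⟩ hq
        simp only [hI, Finset.mem_product, Finset.mem_powersetCard_univ] at hq
        rw [hE]
        simp only
        rw [countE S v, hq.1]
    _ = (I.biUnion E).card := (Finset.card_biUnion hdisj).symm
    _ ≤ _ := Finset.card_le_card hsub



/-- Failure probability of cuckoo hashing with buckets of capacity d and a stash of
size s is Ω(n^{−d−s}).  Items are Fin n, buckets are Fin m with m = ⌈(1+ε)n/d⌉, the
pair of hash functions is uniformly random, and an assignment sends each item x to
bucket h₁(x) (some true), bucket h₂(x) (some false), or the stash (none); it is valid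
if at most s items go to the stash and each bucket receives at most d items. -/
theorem stmt_10 (ε : ℝ) (hε : 0 < ε) (d s : ℕ) (hd : 1 ≤ d) :
    ∃ c : ℝ, 0 < c ∧ ∃ N : ℕ, ∀ n : ℕ, N ≤ n →
      c * (n : ℝ) ^ (-(d + s : ℤ)) ≤
        ((Finset.univ.filter
            (fun p : (Fin n → Fin ⌈(1 + ε) * n / d⌉₊) × (Fin n → Fin ⌈(1 + ε) * n / d⌉₊) =>
              ¬ ∃ f : Fin n → Option Bool,
                  (Finset.univ.filter (fun x : Fin n => f x = none)).card ≤ s ∧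
                  ∀ v : Fin ⌈(1 + ε) * n / d⌉₊,
                    (Finset.univ.filter (fun x : Fin n =>
                      (f x = some true ∧ p.1 x = v) ∨
                      (f x = some false ∧ p.2 x = v))).card ≤ d)).card : ℝ) /
          (Fintype.card ((Fin n → Fin ⌈(1 + ε) * n / d⌉₊) × (Fin n → Fin ⌈(1 + ε) * n / d⌉₊)) : ℝ) := by
  classical
  set k := d + s + 1 with hk
  set C₁ : ℝ := (1 + ε) / d + 1 with hC₁
  have hd0 : (0:ℝ) < d := by exact_mod_cast hd
  have hC₁0 : 0 < C₁ := by positivity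
  set c : ℝ := Real.exp (-(2 * (d:ℝ))) / (2 ^ k * (Nat.factorial k) * C₁ ^ (2 * k - 1)) with hc
  have hc0 : 0 < c := by
    apply div_pos (Real.exp_pos _)
    positivity
  refine ⟨c, hc0, max (2 * k) (d + 1), fun n hn => ?_⟩
  have hn2k : 2 * k ≤ n := le_trans (le_max_left _ _) hn
  have hnd : d + 1 ≤ n := le_trans (le_max_right _ _) hn
  have hn1 : 1 ≤ n := by omega
  have hkn : k ≤ n := by omega
  clear_value k
  set m := ⌈(1 + ε) * n / d⌉₊ with hm
  set X : ℝ := (n : ℝ) with hX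
  have hX1 : (1:ℝ) ≤ X := by rw [hX]; exact_mod_cast hn1
  have hX0 : (0:ℝ) < X := by linarith
  have hm2 : 2 ≤ m := by
    rw [hm]
    have : (1:ℝ) < (1 + ε) * n / d := by
      rw [lt_div_iff₀ hd0]
      have hdn : (d:ℝ) + 1 ≤ (n:ℝ) := by exact_mod_cast hnd
      nlinarith
    have h2 : (1:ℕ) < m := by
      rw [hm]
      exact Nat.lt_ceil.mpr (show ((1:ℕ):ℝ) < (1 + ε) * n / d by exact_mod_cast this)
    omega
  set M : ℝ := (m : ℝ) with hM
  have hM2 : (2:ℝ) ≤ M := by rw [hM]; exact_mod_cast hm2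
  have hM0 : (0:ℝ) < M := by linarith
  have hMlb : (1 + ε) * X / d ≤ M := Nat.le_ceil _
  have hMub : M ≤ C₁ * X := by
    have h1 : M < (1 + ε) * X / d + 1 := by
      have := Nat.ceil_lt_add_one (show (0:ℝ) ≤ (1 + ε) * n / d by positivity)
      exact_mod_cast this
    have h2 : (1 + ε) * X / d = ((1 + ε) / d) * X := by ring
    rw [hC₁]
    nlinarith
  have hXdM : X ≤ d * M := by
    have h1 : (1 + ε) * X ≤ M * d := (div_le_iff₀ hd0).mp hMlb
    nlinarith
  clear_value m M X C₁ c
  -- exp bound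
  have hexp : Real.exp (-(2 / M)) ≤ 1 - 1 / M := by
    have h1 := Real.add_one_le_exp (2 / M)
    have h2 : (0:ℝ) < 2 / M + 1 := by positivity
    rw [Real.exp_neg]
    rw [inv_le_iff_one_le_mul₀ (lt_of_lt_of_le h2 h1)]
    have h3 : 1 ≤ (1 - 1 / M) * (2 / M + 1) := by
      have : (1 - 1 / M) * (2 / M + 1) - 1 = (M - 2) / (M ^ 2) := by
        field_simp; ring
      nlinarith [div_nonneg (by linarith : (0:ℝ) ≤ M - 2) (by positivity : (0:ℝ) ≤ M ^ 2)]
    calc 1 ≤ (1 - 1 / M) * (2 / M + 1) := h3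
      _ ≤ (1 - 1 / M) * Real.exp (2 / M) := by
          apply mul_le_mul_of_nonneg_left h1
          have : 1 / M ≤ 1 / 2 := by
            apply div_le_div_of_nonneg_left (by norm_num) (by norm_num) hM2
          linarith
  have hpow1 : Real.exp (-(2 * (d:ℝ))) ≤ (1 - 1 / M) ^ (n - k) := by
    calc Real.exp (-(2 * (d:ℝ)))
        ≤ Real.exp ((↑(n - k)) * (-(2 / M))) := by
          apply Real.exp_le_exp.mpr
          have h1 : ((n - k : ℕ) : ℝ) ≤ X := by
            rw [hX]; exact_mod_cast Nat.sub_le n k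
          rw [mul_neg, neg_le_neg_iff]
          rw [mul_div_assoc']
          rw [div_le_iff₀ hM0]
          linarith
      _ = Real.exp (-(2 / M)) ^ (n - k) := Real.exp_nat_mul _ _
      _ ≤ (1 - 1 / M) ^ (n - k) := by
          apply pow_le_pow_left₀ (Real.exp_nonneg _) hexp
  -- choose bound
  have hchoose : (X / 2) ^ k / (Nat.factorial k) ≤ (Nat.choose n k : ℝ) := by
    have h1 := Nat.pow_le_choose (α := ℝ) k n
    have h2 : X / 2 ≤ ((n + 1 - k : ℕ) : ℝ) := by
      have : n ≤ 2 * (n + 1 - k) := by omega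
      have := (Nat.cast_le (α := ℝ)).mpr this
      push_cast at this ⊢
      linarith
    calc (X / 2) ^ k / (Nat.factorial k)
        ≤ ((n + 1 - k : ℕ) : ℝ) ^ k / (Nat.factorial k) := by
          apply div_le_div_of_nonneg_right ?_ (by positivity)
          exact pow_le_pow_left₀ (by positivity) h2 k
      _ ≤ (Nat.choose n k : ℝ) := by exact_mod_cast h1
  have hMX : M / C₁ ≤ X := (div_le_iff₀ hC₁0).mpr (by linarith [hMub])
  have hmain : c * (M ^ k * M ^ k) ≤
      (Nat.choose n k : ℝ) * M * (1 - 1 / M) ^ (n - k) * X ^ (d + s) := by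
    have e1 : 2 * k = (2 * k - 1) + 1 := by omega
    have e2 : 2 * k - 1 = k + (d + s) := by omega
    calc c * (M ^ k * M ^ k)
        = Real.exp (-(2 * (d:ℝ))) / (2 ^ k * (Nat.factorial k)) * (M / C₁) ^ (2*k-1) * M := by
          rw [hc, div_pow,
            show M ^ k * M ^ k = M ^ (2*k-1) * M by
              rw [← pow_succ, ← e1, two_mul, pow_add]]
          field_simp
      _ ≤ Real.exp (-(2 * (d:ℝ))) / (2 ^ k * (Nat.factorial k)) * X ^ (2*k-1) * M := by
          gcongr
      _ = (X / 2) ^ k / (Nat.factorial k) * M * Real.exp (-(2 * (d:ℝ))) * X ^ (d + s) := by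
          rw [e2, pow_add, div_pow]
          field_simp
      _ ≤ (Nat.choose n k : ℝ) * M * (1 - 1 / M) ^ (n - k) * X ^ (d + s) := by
          gcongr
  have hpe : (1 - 1 / M) ^ (n - k) * (M ^ (n - k) * M ^ (n - k)) = (M * M - M) ^ (n - k) := by
    rw [← mul_assoc, ← mul_pow,
      show (1 - 1 / M) * M = M - 1 by field_simp, ← mul_pow]
    congr 1
    ring
  have hBle : c * (M ^ n * M ^ n) ≤
      (Nat.choose n k : ℝ) * M * (M * M - M) ^ (n - k) * X ^ (d + s) := by
    have hMnk : M ^ n = M ^ (n - k) * M ^ k := by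
      rw [← pow_add]
      congr 1
      omega
    calc c * (M ^ n * M ^ n)
        = c * (M ^ k * M ^ k) * (M ^ (n - k) * M ^ (n - k)) := by
          rw [hMnk]; ring
      _ ≤ (Nat.choose n k : ℝ) * M * (1 - 1 / M) ^ (n - k) * X ^ (d + s)
            * (M ^ (n - k) * M ^ (n - k)) := by
          apply mul_le_mul_of_nonneg_right hmain (by positivity)
      _ = (Nat.choose n k : ℝ) * M * ((1 - 1 / M) ^ (n - k) * (M ^ (n - k) * M ^ (n - k)))
            * X ^ (d + s) := by ring
      _ = (Nat.choose n k : ℝ) * M * (M * M - M) ^ (n - k) * X ^ (d + s) := by rw [hpe]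
  have hcount := countLB n m d s
  rw [← hk] at hcount
  have hm0 : 0 < m := Nat.lt_of_lt_of_le (by norm_num) hm2
  have hmm : m ≤ m * m := Nat.le_mul_of_pos_left m hm0
  have hcast : ((Nat.choose n k * m * (m * m - m) ^ (n - k) : ℕ) : ℝ)
      = (Nat.choose n k : ℝ) * M * (M * M - M) ^ (n - k) := by
    rw [hM]
    push_cast [Nat.cast_sub hmm]
    ring
  have hA : (Nat.choose n k : ℝ) * M * (M * M - M) ^ (n - k) ≤
      ((Finset.univ.filter
        (fun p : (Fin n → Fin m) × (Fin n → Fin m) =>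
          ¬ ∃ f : Fin n → Option Bool,
              (Finset.univ.filter (fun x : Fin n => f x = none)).card ≤ s ∧
              ∀ v : Fin m,
                (Finset.univ.filter (fun x : Fin n =>
                  (f x = some true ∧ p.1 x = v) ∨
                  (f x = some false ∧ p.2 x = v))).card ≤ d)).card : ℝ) := by
    rw [← hcast]
    exact_mod_cast hcount
  have hD : ((Fintype.card ((Fin n → Fin m) × (Fin n → Fin m)) : ℕ) : ℝ) = M ^ n * M ^ n := by
    simp only [Fintype.card_prod, Fintype.card_fun, Fintype.card_fin]
    rw [hM]
    push_cast
    ring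
  rw [hD]
  have hzp : (X : ℝ) ^ (-(d + s : ℤ)) = (X ^ (d + s))⁻¹ := by
    rw [show (-(d + s : ℤ)) = -((d + s : ℕ) : ℤ) by push_cast; ring, zpow_neg, zpow_natCast]
  rw [hzp, ← div_eq_mul_inv, div_le_div_iff₀ (by positivity) (by positivity)]
  calc c * (M ^ n * M ^ n)
      ≤ (Nat.choose n k : ℝ) * M * (M * M - M) ^ (n - k) * X ^ (d + s) := hBle
    _ ≤ _ * X ^ (d + s) := by
        apply mul_le_mul_of_nonneg_right hA (by positivity)
end
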